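/- arXiv:1109.6925 — 2 statements merged into one kernel-verified Lean document; each statement's English description precedes it below -/
import Mathlib

section
/- Let $n \ge 2$ and let $\lambda_2$ be the second smallest eigenvalue of the Laplacian of a connected graph $G$ on $n$ vertices with diameter $\mathrm{diam}(G)$. Then $\mathrm{diam}(G) \ge 4/(n\lambda_2)$, and consequently $\lambda_2 \ge 4/n^2$. -/
/-!
Let `f` be a unit eigenvector for `λ₂`. If `G` is connected, the kernel of the Laplacian `L` is
spanned by the constant vector, so it cannot contain two orthonormal eigenvectors: `λ₂ > 0`. As `L`
is symmetric and kills constants, `λ₂ ∑ f = 0`, so `∑ f = 0`. With `M = max f` and `m = min f`,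
`0 ≤ ∑ (M - f i)(f i - m) = -n M m - 1`, hence `n (M - m)² ≥ -4 n M m ≥ 4`. Along a shortest path
from a maximum to a minimum of `f`, Cauchy–Schwarz gives
`(M - m)² ≤ diam · ∑_{path edges} (f a - f b)² ≤ diam · fᵀ L f = diam · λ₂`.
Finally `diam < n` yields `λ₂ ≥ 4 / n²`.
-/

open Matrix Finset

lemma four_le_card_mul_sq_sub {ι : Type*} [Fintype ι] {x : ι → ℝ} (hsum : ∑ i, x i = 0)
    (hnorm : x ⬝ᵥ x = 1) {u w : ι} (hu : ∀ i, x i ≤ x u) (hw : ∀ i, x w ≤ x i) :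
    4 ≤ Fintype.card ι * (x u - x w) ^ 2 := by
  have hexpand : ∑ i, (x u - x i) * (x i - x w) = -(Fintype.card ι * (x u * x w)) - 1 := by
    have (i : ι) : (x u - x i) * (x i - x w) = (x u + x w) * x i - x i * x i - x u * x w := by
      ring
    simp only [this, sum_sub_distrib, ← mul_sum, hsum, sum_const, card_univ, nsmul_eq_mul]
    rw [← dotProduct, hnorm]
    ring
  have hnonneg : 0 ≤ ∑ i, (x u - x i) * (x i - x w) :=
    sum_nonneg fun i _ => mul_nonneg (sub_nonneg.mpr (hu i)) (sub_nonneg.mpr (hw i))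
  nlinarith [mul_nonneg (Nat.cast_nonneg (Fintype.card ι) : (0:ℝ) ≤ _) (sq_nonneg (x u + x w))]

namespace SimpleGraph

variable {V : Type*} {G : SimpleGraph V}

namespace Walk

lemma sum_darts_sub {M : Type*} [AddCommGroup M] (f : V → M) {u w : V} (q : G.Walk u w) :
    (q.darts.map fun d => f d.fst - f d.snd).sum = f u - f w := by
  induction q with
  | nil => simp
  | cons _ _ ih => simp [ih]

lemma sq_sub_le_length_mul_sum_darts (f : V → ℝ) {u w : V} (q : G.Walk u w) :
    (f u - f w) ^ 2 ≤ q.length * (q.darts.map fun d => (f d.fst - f d.snd) ^ 2).sum := by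
  have := sq_sum_le_card_mul_sum_sq (s := (univ : Finset (Fin q.darts.length)))
    (f := fun i => f q.darts[i.1].fst - f q.darts[i.1].snd)
  simpa only [Fin.sum_univ_fun_getElem q.darts (fun d => f d.fst - f d.snd),
    Fin.sum_univ_fun_getElem q.darts (fun d => (f d.fst - f d.snd) ^ 2), card_univ,
    Fintype.card_fin, length_darts, sum_darts_sub] using this

lemma IsTrail.nodup_darts_append_map_symm {u w : V} {q : G.Walk u w} (hq : q.IsTrail) :
    (q.darts ++ q.darts.map Dart.symm).Nodup := by
  have hinj := List.inj_on_of_nodup_map hq.edges_nodup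
  refine List.nodup_append'.mpr ⟨hq.edges_nodup.of_map _, (hq.edges_nodup.of_map _).map
    (Function.Involutive.injective fun d => Dart.symm_symm d), ?_⟩
  rintro d hd hd'
  obtain ⟨e, he, rfl⟩ := List.mem_map.mp hd'
  exact e.symm_ne (hinj hd he (Dart.edge_symm e))

lemma IsTrail.two_nsmul_sum_darts_le [Fintype V] [DecidableRel G.Adj] {M : Type*}
    [AddCommMonoid M] [PartialOrder M] [IsOrderedAddMonoid M] {h : G.Dart → M}
    (h_nonneg : ∀ d, 0 ≤ h d) (h_symm : ∀ d, h d.symm = h d)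
    {u w : V} {q : G.Walk u w} (hq : q.IsTrail) :
    2 • (q.darts.map h).sum ≤ ∑ d, h d := by
  classical
  calc 2 • (q.darts.map h).sum = ((q.darts ++ q.darts.map Dart.symm).map h).sum := by
        simp [two_nsmul, Function.comp_def, h_symm]
    _ = ∑ d ∈ (q.darts ++ q.darts.map Dart.symm).toFinset, h d :=
        (List.sum_toFinset h hq.nodup_darts_append_map_symm).symm
    _ ≤ ∑ d, h d := sum_le_univ_sum_of_nonneg fun d => h_nonneg d

end Walk

lemma sum_darts_eq_sum_sum_ite [Fintype V] [DecidableRel G.Adj] {M : Type*} [AddCommMonoid M]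
    (h : V → V → M) :
    ∑ d : G.Dart, h d.fst d.snd = ∑ i, ∑ j, if G.Adj i j then h i j else 0 := by
  rw [← Fintype.sum_prod_type', ← sum_filter]
  refine sum_nbij Dart.toProd (fun d _ => by simp) (Dart.toProd_injective.injOn) ?_ fun _ _ => rfl
  rintro p hp
  exact ⟨⟨p, (mem_filter.mp hp).2⟩, mem_coe.mpr (mem_univ _), rfl⟩

lemma Connected.diam_lt_card [Fintype V] (hconn : G.Connected) : G.diam < Fintype.card V := by
  have := hconn.nonempty
  obtain ⟨u, w, huw⟩ := G.exists_dist_eq_diam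
  obtain ⟨q, hq, hlen⟩ := hconn.exists_path_of_dist u w
  exact huw ▸ hlen ▸ hq.length_lt

variable [Fintype V] [DecidableEq V] [DecidableRel G.Adj]

lemma dotProduct_lapMatrix_mulVec_eq_sum_darts (x : V → ℝ) :
    x ⬝ᵥ (G.lapMatrix ℝ *ᵥ x) = (∑ d : G.Dart, (x d.fst - x d.snd) ^ 2) / 2 := by
  rw [← toLinearMap₂'_apply', lapMatrix_toLinearMap₂',
    sum_darts_eq_sum_sum_ite fun i j => (x i - x j) ^ 2]

lemma Walk.IsTrail.sum_darts_sq_sub_le {u w : V} {q : G.Walk u w} (hq : q.IsTrail)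
    (x : V → ℝ) :
    (q.darts.map fun d => (x d.fst - x d.snd) ^ 2).sum ≤ x ⬝ᵥ (G.lapMatrix ℝ *ᵥ x) := by
  have := hq.two_nsmul_sum_darts_le (h := fun d => (x d.fst - x d.snd) ^ 2)
    (fun _ => sq_nonneg _) fun d => by
      simp only [Dart.symm_toProd, Prod.fst_swap, Prod.snd_swap]
      ring
  rw [dotProduct_lapMatrix_mulVec_eq_sum_darts]
  linarith [two_nsmul ((q.darts.map fun d => (x d.fst - x d.snd) ^ 2).sum)]

lemma Connected.sq_sub_le_diam_mul_dotProduct_lapMatrix_mulVec (hconn : G.Connected)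
    (x : V → ℝ) (u w : V) : (x u - x w) ^ 2 ≤ G.diam * (x ⬝ᵥ (G.lapMatrix ℝ *ᵥ x)) := by
  obtain ⟨q, hq, hlen⟩ := hconn.exists_path_of_dist u w
  have := hconn.nonempty
  have hdist : G.dist u w ≤ G.diam := dist_le_diam (connected_iff_ediam_ne_top.mp hconn)
  calc (x u - x w) ^ 2 ≤ q.length * (q.darts.map fun d => (x d.fst - x d.snd) ^ 2).sum :=
        q.sq_sub_le_length_mul_sum_darts x
    _ ≤ G.diam * (x ⬝ᵥ (G.lapMatrix ℝ *ᵥ x)) := by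
        gcongr
        · exact List.sum_nonneg fun _ h => by
            obtain ⟨_, _, rfl⟩ := List.mem_map.mp h
            positivity
        · exact_mod_cast hlen ▸ hdist
        · exact hq.isTrail.sum_darts_sq_sub_le x

lemma nonneg_of_lapMatrix_mulVec_eq_smul {x : V → ℝ} {μ : ℝ} (hx : x ⬝ᵥ x = 1)
    (h : G.lapMatrix ℝ *ᵥ x = μ • x) : 0 ≤ μ := by
  have := (G.posSemidef_lapMatrix ℝ).dotProduct_mulVec_nonneg x
  rwa [star_trivial, h, dotProduct_smul, hx, smul_eq_mul, mul_one] at this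

lemma sum_eq_zero_of_lapMatrix_mulVec_eq_smul {x : V → ℝ} {μ : ℝ}
    (h : G.lapMatrix ℝ *ᵥ x = μ • x) (hμ : μ ≠ 0) : ∑ i, x i = 0 := by
  have hker : (fun _ => (1 : ℝ)) ᵥ* G.lapMatrix ℝ = 0 := by
    rw [← G.isSymm_lapMatrix (R := ℝ), vecMul_transpose, lapMatrix_mulVec_const_eq_zero]
  have : μ * ∑ i, x i = 0 :=
    calc μ * ∑ i, x i = (fun _ => (1 : ℝ)) ⬝ᵥ (G.lapMatrix ℝ *ᵥ x) := by
          simp [h, dotProduct, mul_sum]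
      _ = 0 := by rw [dotProduct_mulVec, hker, zero_dotProduct]
  exact (mul_eq_zero.mp this).resolve_left hμ

lemma Connected.dotProduct_ne_zero_of_lapMatrix_mulVec_eq_zero (hconn : G.Connected)
    {x y : V → ℝ} (hx : G.lapMatrix ℝ *ᵥ x = 0) (hy : G.lapMatrix ℝ *ᵥ y = 0)
    (hxx : x ⬝ᵥ x = 1) (hyy : y ⬝ᵥ y = 1) : x ⬝ᵥ y ≠ 0 := by
  obtain ⟨v⟩ := hconn.nonempty
  have hconst {z : V → ℝ} (hz : G.lapMatrix ℝ *ᵥ z = 0) : z = fun _ => z v :=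
    funext fun i => (lapMatrix_mulVec_eq_zero_iff_forall_reachable G).mp hz i v (hconn i v)
  rw [hconst hx] at hxx ⊢
  rw [hconst hy] at hyy ⊢
  simp only [dotProduct, sum_const, card_univ, nsmul_eq_mul] at hxx hyy ⊢
  intro hxy
  have : (Fintype.card V * (x v * y v)) ^ 2 =
      Fintype.card V * (x v * x v) * (Fintype.card V * (y v * y v)) := by ring
  rw [hxy, hxx, hyy] at this
  norm_num at this

lemma Connected.pos_of_lapMatrix_mulVec_eq_smul (hconn : G.Connected) {x y : V → ℝ}
    {ν μ : ℝ} (hx : G.lapMatrix ℝ *ᵥ x = ν • x) (hy : G.lapMatrix ℝ *ᵥ y = μ • y)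
    (hxx : x ⬝ᵥ x = 1) (hyy : y ⬝ᵥ y = 1) (hxy : x ⬝ᵥ y = 0) (hνμ : ν ≤ μ) : 0 < μ := by
  refine (nonneg_of_lapMatrix_mulVec_eq_smul hyy hy).lt_of_ne fun hμ => ?_
  have hν : ν = 0 := le_antisymm (hμ ▸ hνμ) (nonneg_of_lapMatrix_mulVec_eq_smul hxx hx)
  exact hconn.dotProduct_ne_zero_of_lapMatrix_mulVec_eq_zero (by rw [hx, hν, zero_smul])
    (by rw [hy, ← hμ, zero_smul]) hxx hyy hxy

end SimpleGraph

theorem stmt_12 (n : ℕ) (hn : 2 ≤ n) (G : SimpleGraph (Fin n)) [DecidableRel G.Adj]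
    (hconn : G.Connected)
    (lam : Fin n → ℝ) (v : Fin n → Fin n → ℝ)
    (hmono : Monotone lam)
    (horth : ∀ i j, v i ⬝ᵥ v j = if i = j then (1 : ℝ) else 0)
    (heig : ∀ i, (G.lapMatrix ℝ).mulVec (v i) = lam i • v i) :
    (G.diam : ℝ) ≥ 4 / (n * lam ⟨1, hn⟩) ∧ lam ⟨1, hn⟩ ≥ 4 / (n : ℝ) ^ 2 := by
  set i₀ : Fin n := ⟨0, by omega⟩
  set i₁ : Fin n := ⟨1, hn⟩
  have hunit (i : Fin n) : v i ⬝ᵥ v i = 1 := by simpa using horth i i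
  have hμ : 0 < lam i₁ := hconn.pos_of_lapMatrix_mulVec_eq_smul (heig i₀) (heig i₁)
    (hunit i₀) (hunit i₁) (by simpa [i₀, i₁, Fin.ext_iff] using horth i₀ i₁)
    (hmono (Fin.mk_le_mk.mpr zero_le_one))
  have hsum := G.sum_eq_zero_of_lapMatrix_mulVec_eq_smul (heig i₁) hμ.ne'
  have hquad : v i₁ ⬝ᵥ (G.lapMatrix ℝ *ᵥ v i₁) = lam i₁ := by
    rw [heig, dotProduct_smul, hunit, smul_eq_mul, mul_one]
  have : Nonempty (Fin n) := hconn.nonempty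
  obtain ⟨u, hu⟩ := Finite.exists_max (v i₁)
  obtain ⟨w, hw⟩ := Finite.exists_min (v i₁)
  have hspread := four_le_card_mul_sq_sub hsum (hunit i₁) hu hw
  have hpath := hconn.sq_sub_le_diam_mul_dotProduct_lapMatrix_mulVec (v i₁) u w
  have hdiam : (G.diam : ℝ) ≤ n := by
    exact_mod_cast (Fintype.card_fin n ▸ hconn.diam_lt_card).le
  rw [Fintype.card_fin] at hspread
  rw [hquad] at hpath
  have hmain : 4 ≤ n * (G.diam * lam i₁) := hspread.trans (by gcongr)
  constructor
  · rw [ge_iff_le, div_le_iff₀ (by positivity)]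
    linarith
  · rw [ge_iff_le, div_le_iff₀ (by positivity)]
    calc 4 ≤ n * (G.diam * lam i₁) := hmain
      _ ≤ n * (n * lam i₁) := by gcongr
      _ = lam i₁ * n ^ 2 := by ring
end

section
/- Let $e \in \mathbb{R}^n$ with $\sum_i e_i = 0$, $s_i > 0$, $\Psi_0 = \sum_i e_i^2/s_i$, $\bar{s}_h = n/\sum_i (1/s_i)$ and $\bar{s}_a = \frac{1}{n}\sum_i s_i$. Define $\Psi_1 = \sum_i (e_i+1/2)^2/s_i - n/(4\bar{s}_a)$. Then $\Psi_1 \le \Psi_0 + \sqrt{\Psi_0 \cdot n/\bar{s}_h} + \frac{n}{4}\left(\frac{1}{\bar{s}_h} - \frac{1}{\bar{s}_a}\right)$. -/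
/-! Expanding the square gives `Ψ₁ = Ψ₀ + ∑ eᵢ/sᵢ + (∑ 1/sᵢ)/4 - n/(4 s̄ₐ)`, and `(∑ 1/sᵢ)/4 = n/(4 s̄ₕ)`.
The cross term `∑ eᵢ/sᵢ = ⟨e, 1⟩_S` is bounded by Cauchy–Schwarz for the inner product
`⟨x, y⟩_S = ∑ xᵢ yᵢ / sᵢ` by `√(⟨e, e⟩_S ⟨1, 1⟩_S) = √(Ψ₀ · n / s̄ₕ)`. -/

open Finset

namespace Finset

variable {ι : Type*} (t : Finset ι) (e s : ι → ℝ)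

theorem sum_add_half_sq_div_eq :
    ∑ i ∈ t, (e i + 1 / 2) ^ 2 / s i =
      ∑ i ∈ t, e i ^ 2 / s i + ∑ i ∈ t, e i / s i + (∑ i ∈ t, 1 / s i) / 4 := by
  rw [sum_div, ← sum_add_distrib, ← sum_add_distrib]
  exact sum_congr rfl fun i _ => by ring

theorem sum_div_le_sqrt_sum_sq_div_mul_sum_inv (hs : ∀ i ∈ t, 0 ≤ s i) :
    ∑ i ∈ t, e i / s i ≤ √((∑ i ∈ t, e i ^ 2 / s i) * ∑ i ∈ t, 1 / s i) := by
  refine Real.le_sqrt_of_sq_le (sum_sq_le_sum_mul_sum_of_sq_le_mul t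
    (fun i hi => div_nonneg (sq_nonneg _) (hs i hi))
    (fun i hi => one_div_nonneg.mpr (hs i hi)) fun i _ => le_of_eq ?_)
  ring

end Finset

theorem stmt_14_general (n : ℕ) (hn : 0 < n) (e s : Fin n → ℝ)
    (hs : ∀ i, 0 < s i) :
    ∑ i, (e i + 1 / 2) ^ 2 / s i - (n : ℝ) / (4 * ((∑ i, s i) / n)) ≤
      (∑ i, e i ^ 2 / s i) +
        Real.sqrt ((∑ i, e i ^ 2 / s i) * ((n : ℝ) / ((n : ℝ) / ∑ i, 1 / s i))) +
        (n : ℝ) / 4 * (1 / ((n : ℝ) / ∑ i, 1 / s i) - 1 / ((∑ i, s i) / n)) := by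
  have hn₀ : (n : ℝ) ≠ 0 := by exact_mod_cast hn.ne'
  have hcross := sum_div_le_sqrt_sum_sq_div_mul_sum_inv univ e s fun i _ => (hs i).le
  have hmeans : (n : ℝ) / 4 * (1 / ((n : ℝ) / ∑ i, 1 / s i) - 1 / ((∑ i, s i) / n)) =
      (∑ i, 1 / s i) / 4 - (n : ℝ) / (4 * ((∑ i, s i) / n)) := by
    field_simp
  rw [sum_add_half_sq_div_eq, div_div_cancel₀ hn₀, hmeans]
  linarith

theorem stmt_14 (n : ℕ) (hn : 0 < n) (e s : Fin n → ℝ)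
    (he : ∑ i, e i = 0) (hs : ∀ i, 0 < s i) :
    ∑ i, (e i + 1 / 2) ^ 2 / s i - (n : ℝ) / (4 * ((∑ i, s i) / n)) ≤
      (∑ i, e i ^ 2 / s i) +
        Real.sqrt ((∑ i, e i ^ 2 / s i) * ((n : ℝ) / ((n : ℝ) / ∑ i, 1 / s i))) +
        (n : ℝ) / 4 * (1 / ((n : ℝ) / ∑ i, 1 / s i) - 1 / ((∑ i, s i) / n)) :=
  stmt_14_general n hn e s hs
end
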